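/- arXiv:0901.3005 — 6 statements merged into one kernel-verified Lean document; each statement's English description precedes it below -/
import Mathlib

section
/- Let k be a field of characteristic 2, R = k[a,b,c,d]/(ad - bc - 1), and let σ be the k-algebra automorphism of R induced by swapping a ↔ b and c ↔ d (conjugation by the matrix [[0,1],[1,0]]). Then σ exchanges ad and bc, and for every r ≥ 1, no power (ad)^(2^r) is fixed by σ. -/
open MvPolynomial

noncomputable section

/-- The polynomial ring `k[a,b,c,d]` (variables indexed by `Fin 4`). -/
abbrev P (k : Type*) [Field k] := MvPolynomial (Fin 4) k

/-- The ideal `(ad - bc - 1)`. -/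
def sl2Rel (k : Type*) [Field k] : Ideal (P k) :=
  Ideal.span {X 0 * X 3 - X 1 * X 2 - 1}

/-- `R = k[a,b,c,d]/(ad - bc - 1)`, the coordinate ring of `SL₂`. -/
abbrev R (k : Type*) [Field k] := P k ⧸ sl2Rel k

def va (k : Type*) [Field k] : R k := Ideal.Quotient.mk _ (X 0)
def vb (k : Type*) [Field k] : R k := Ideal.Quotient.mk _ (X 1)
def vc (k : Type*) [Field k] : R k := Ideal.Quotient.mk _ (X 2)
def vd (k : Type*) [Field k] : R k := Ideal.Quotient.mk _ (X 3)

lemma sl2Rel_ne_top (k : Type*) [Field k] : sl2Rel k ≠ ⊤ := by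
  intro h
  have h1 : (1 : P k) ∈ sl2Rel k := h ▸ Submodule.mem_top
  have hle : sl2Rel k ≤ RingHom.ker (aeval (fun i : Fin 4 => if i = 0 ∨ i = 3 then (1:k) else 0) : P k →ₐ[k] k).toRingHom := by
    rw [sl2Rel, Ideal.span_le]
    rintro x hx
    simp only [Set.mem_singleton_iff] at hx
    subst hx
    simp [RingHom.mem_ker]
  have := hle h1
  simp [RingHom.mem_ker] at this

set_option maxHeartbeats 1000000 in
/-- The `k`-algebra automorphism `σ` of `R` induced by `a ↔ b`, `c ↔ d`
exists; it exchanges `ad` and `bc`, and for every `r ≥ 1` no power `(ad)^(2^r)`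
is fixed by `σ`. -/
theorem stmt2 (k : Type*) [Field k] [CharP k 2] :
    (∃ σ : R k ≃ₐ[k] R k,
      σ (va k) = vb k ∧ σ (vb k) = va k ∧ σ (vc k) = vd k ∧ σ (vd k) = vc k) ∧
    ∀ σ : R k ≃ₐ[k] R k,
      (σ (va k) = vb k ∧ σ (vb k) = va k ∧ σ (vc k) = vd k ∧ σ (vd k) = vc k) →
      σ (va k * vd k) = vb k * vc k ∧
      ∀ r : ℕ, 1 ≤ r → σ ((va k * vd k) ^ (2 ^ r)) ≠ (va k * vd k) ^ (2 ^ r) := by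
  haveI : Nontrivial (R k) := Ideal.Quotient.nontrivial_iff.mpr (sl2Rel_ne_top k)
  have h2k : (2 : k) = 0 := by
    have := CharP.cast_eq_zero k 2; exact_mod_cast this
  have h2R : (2 : R k) = 0 := by
    rw [show (2 : R k) = algebraMap k (R k) 2 from (map_ofNat _ 2).symm, h2k, map_zero]
  haveI : CharP (R k) 2 := (CharP.charP_iff_prime_eq_zero Nat.prime_two).2 (by rw [Nat.cast_ofNat]; exact h2R)
  have hbc : vb k * vc k = va k * vd k + 1 := by
    rw [va, vb, vc, vd, ← map_mul, ← map_mul, ← map_one (Ideal.Quotient.mk (sl2Rel k)),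
      ← map_add, Ideal.Quotient.eq]
    have hg : (X 0 * X 3 - X 1 * X 2 - 1 : P k) ∈ sl2Rel k :=
      Ideal.subset_span rfl
    have : (X 1 * X 2 - (X 0 * X 3 + 1) : P k) = -(X 0 * X 3 - X 1 * X 2 - 1) - 2 := by ring
    rw [this]
    have h2P : (2 : P k) ∈ sl2Rel k := by
      rw [show (2 : P k) = algebraMap k (P k) 2 from (map_ofNat _ 2).symm, h2k, map_zero]
      exact (sl2Rel k).zero_mem
    exact Ideal.sub_mem _ ((sl2Rel k).neg_mem hg) h2P
  constructor
  · -- construct σ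
    set e : Fin 4 ≃ Fin 4 := (Equiv.swap 0 1).trans (Equiv.swap 2 3) with he
    have he0 : e 0 = 1 := by decide
    have he1 : e 1 = 0 := by decide
    have he2 : e 2 = 3 := by decide
    have he3 : e 3 = 2 := by decide
    set f : P k ≃ₐ[k] P k := renameEquiv k e with hf
    have hmap : sl2Rel k = (sl2Rel k).map (f : P k →+* P k) := by
      rw [sl2Rel, Ideal.map_span, Set.image_singleton]
      have hfX : ∀ i, (f : P k →+* P k) (X i) = X (e i) := by
        intro i
        show f (X i) = X (e i)
        simp [hf]
      have : (f : P k →+* P k) (X 0 * X 3 - X 1 * X 2 - 1) =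
          -(X 0 * X 3 - X 1 * X 2 - 1) - 2 := by
        simp only [map_sub, map_mul, map_one, hfX, he0, he1, he2, he3]
        ring
      rw [this]
      have h2P : (2 : P k) = 0 := by
        rw [show (2 : P k) = algebraMap k (P k) 2 from (map_ofNat _ 2).symm, h2k, map_zero]
      rw [h2P, sub_zero, Ideal.span_singleton_neg]
    refine ⟨Ideal.quotientEquivAlg (sl2Rel k) (sl2Rel k) f hmap, ?_, ?_, ?_, ?_⟩ <;>
      · show Ideal.quotientEquivAlg _ _ _ _ (Ideal.Quotient.mk _ _) = Ideal.Quotient.mk _ _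
        rw [show ∀ x : P k, Ideal.quotientEquivAlg (sl2Rel k) (sl2Rel k) f hmap
            (Ideal.Quotient.mk _ x) = Ideal.Quotient.mk _ (f x) from fun x => rfl]
        congr 1
        simp [hf, he0, he1, he2, he3]
  · rintro σ ⟨ha, hb, hc, hd⟩
    have key : σ (va k * vd k) = vb k * vc k := by rw [map_mul, ha, hd]
    refine ⟨key, fun r hr h => ?_⟩
    rw [map_pow, key, hbc, add_pow_char_pow, one_pow] at h
    have h10 : (1 : R k) ≠ 0 := by
      rw [show (1 : R k) = Ideal.Quotient.mk _ 1 from rfl, Ne, Ideal.Quotient.eq_zero_iff_mem,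
        ← Ideal.eq_top_iff_one]
      exact sl2Rel_ne_top k
    exact h10 (by linear_combination h : (1 : R k) = 0)
end
end

section
/- Let k be a field of characteristic 2. The element x = ad in the subring A = k[ab, ad, cd] of R = k[a,b,c,d]/(ad - bc - 1) satisfies the monic polynomial x^2 - x - (ab)(cd) over the subring B = k[ab, cd], and this polynomial is separable (its derivative is the unit -1). -/
open MvPolynomial

noncomputable section

/-! Since `ad - bc = 1`, `(ad)² - ad - (ab)(cd) = ad · (ad - bc - 1) = 0`. The derivative
`2X - 1` of `X² - X - (ab)(cd)` is `-1` as soon as `2 = 0`. -/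

section QuadraticX

open Polynomial hiding X C

variable {S : Type*} [CommRing S]

theorem monic_X_sq_sub_X_sub_C (c : S) :
    (Polynomial.X ^ 2 - Polynomial.X - Polynomial.C c : S[X]).Monic := by
  rw [sub_sub]
  refine monic_X_pow_sub (lt_of_le_of_lt (degree_add_le _ _) (max_lt ?_ ?_))
  · exact degree_X_le.trans_lt (by norm_num)
  · exact degree_C_le.trans_lt (by norm_num)

theorem derivative_X_sq_sub_X_sub_C_of_two_eq_zero (h2 : (2 : S) = 0) (c : S) :
    derivative (Polynomial.X ^ 2 - Polynomial.X - Polynomial.C c : S[X]) = -1 := by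
  rw [derivative_sub, derivative_sub, derivative_X_sq, derivative_X, derivative_C, h2,
    Polynomial.C_0]
  ring

end QuadraticX

theorem two_eq_zero_of_algebra_of_charP_two {K S : Type*} [CommSemiring K] [CharP K 2]
    [Semiring S] [Algebra K S] : (2 : S) = 0 := by
  rw [← map_ofNat (algebraMap K S) 2, CharTwo.two_eq_zero, map_zero]

theorem va_mul_vd_sub_vb_mul_vc (k : Type*) [Field k] : va k * vd k - vb k * vc k = 1 := by
  rw [← sub_eq_zero, va, vb, vc, vd, ← map_one (Ideal.Quotient.mk (sl2Rel k)), ← map_mul,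
    ← map_mul, ← map_sub, ← map_sub, Ideal.Quotient.eq_zero_iff_mem]
  exact Ideal.subset_span rfl

theorem va_mul_vd_sq_sub_eq_zero (k : Type*) [Field k] :
    (va k * vd k) ^ 2 - va k * vd k - va k * vb k * (vc k * vd k) = 0 := by
  linear_combination va k * vd k * va_mul_vd_sub_vb_mul_vc k

theorem stmt3_general (k : Type*) [Field k] [CharP k 2]
    (B : Subalgebra k (R k))
    (hab : va k * vb k ∈ B) (hcd : vc k * vd k ∈ B) :
    letI f : Polynomial B :=
      Polynomial.X ^ 2 - Polynomial.X -
        Polynomial.C (⟨va k * vb k, hab⟩ * ⟨vc k * vd k, hcd⟩)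
    f.Monic ∧ Polynomial.aeval (va k * vd k) f = 0 ∧ IsUnit f.derivative := by
  refine ⟨monic_X_sq_sub_X_sub_C _, ?_, ?_⟩
  · simp only [map_sub, map_pow, Polynomial.aeval_X, Polynomial.aeval_C]
    exact va_mul_vd_sq_sub_eq_zero k
  · rw [derivative_X_sq_sub_X_sub_C_of_two_eq_zero
      (two_eq_zero_of_algebra_of_charP_two (K := k))]
    exact isUnit_neg_one (α := Polynomial B)

/-- The element `ad` satisfies the monic polynomial `x² - x - (ab)(cd)`
with coefficients in the subring `B = k[ab, cd]`, and this polynomial is separable: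
its derivative is a unit (namely `-1`). -/
theorem stmt3 (k : Type*) [Field k] [CharP k 2]
    (B : Subalgebra k (R k)) (hB : B = Algebra.adjoin k {va k * vb k, vc k * vd k})
    (hab : va k * vb k ∈ B) (hcd : vc k * vd k ∈ B) :
    letI f : Polynomial B :=
      Polynomial.X ^ 2 - Polynomial.X -
        Polynomial.C (⟨va k * vb k, hab⟩ * ⟨vc k * vd k, hcd⟩)
    f.Monic ∧ Polynomial.aeval (va k * vd k) f = 0 ∧ IsUnit f.derivative :=
  stmt3_general k B hab hcd
end
end

section
/- Let k be a field of characteristic 2 and R = k[a,b,c,d]/(ad - bc - 1). The k-subalgebra B of R generated by ab and cd is a polynomial ring in two variables: the k-algebra homomorphism k[X,Y] → R sending X ↦ ab, Y ↦ cd is injective. -/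
open MvPolynomial

noncomputable section

/-!
Specialize to the point `[[1, x], [y, 1 + x y]]` of `SL₂(k[x][y])`: it sends `ab ↦ x` and
`cd ↦ y + x y²`. These are algebraically independent over `k`, since `x` is transcendental over `k`
and `y + x y²` has positive degree in `y` with leading coefficient `x`, a non-zero-divisor of `k[x]`.
-/

section SL2Points

variable {k : Type*} [Field k] {A : Type*} [CommRing A] [Algebra k A]

def sl2Lift (a b c d : A) (h : a * d - b * c = 1) : R k →ₐ[k] A :=
  Ideal.Quotient.liftₐ (sl2Rel k) (MvPolynomial.aeval ![a, b, c, d]) fun p hp => by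
    obtain ⟨q, rfl⟩ := Ideal.mem_span_singleton'.mp hp
    simp [h]

variable (a b c d : A) (h : a * d - b * c = 1)

lemma sl2Lift_mk (p : P k) :
    sl2Lift a b c d h (Ideal.Quotient.mk _ p) = MvPolynomial.aeval ![a, b, c, d] p :=
  rfl

@[simp] lemma sl2Lift_va : sl2Lift a b c d h (va k) = a := (sl2Lift_mk ..).trans (aeval_X ..)
@[simp] lemma sl2Lift_vb : sl2Lift a b c d h (vb k) = b := (sl2Lift_mk ..).trans (aeval_X ..)
@[simp] lemma sl2Lift_vc : sl2Lift a b c d h (vc k) = c := (sl2Lift_mk ..).trans (aeval_X ..)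
@[simp] lemma sl2Lift_vd : sl2Lift a b c d h (vd k) = d := (sl2Lift_mk ..).trans (aeval_X ..)

end SL2Points

local notation "𝐱" => Polynomial.C Polynomial.X
local notation "𝐲" => Polynomial.X

namespace Polynomial

lemma transcendental_X_add_C_mul_X_sq {S : Type*} [CommRing S] [Nontrivial S] {s : S}
    (hs : s ∈ nonZeroDivisors S) : Transcendental S (X + C s * X ^ 2 : S[X]) := by
  have hdeg : (X + C s * X ^ 2 : S[X]).natDegree = 2 := by
    have hs₀ := nonZeroDivisors.ne_zero hs
    compute_degree!
  apply Polynomial.transcendental _ (by rw [hdeg]; norm_num)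
  rwa [leadingCoeff, hdeg, coeff_add, coeff_C_mul, coeff_X_pow_self, coeff_X, mul_one,
    if_neg (by norm_num), zero_add]

lemma algebraicIndependent_C_X_X_add_C_X_mul_X_sq (k : Type*) [CommRing k] [Nontrivial k] :
    AlgebraicIndependent k ![(𝐱 : k[X][X]), 𝐲 + 𝐱 * 𝐲 ^ 2] := by
  have hx : AlgebraicIndependent k fun _ : Unit => (X : k[X]) :=
    algebraicIndependent_unique_type_iff.mpr (transcendental_X k)
  have hy : AlgebraicIndependent k[X] fun _ : Unit => (𝐲 + 𝐱 * 𝐲 ^ 2 : k[X][X]) :=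
    algebraicIndependent_unique_type_iff.mpr <|
      transcendental_X_add_C_mul_X_sq X_mem_nonzeroDivisors
  have := (hx.sumElim_comp hy).comp ![Sum.inr (), Sum.inl ()] (by decide)
  convert this using 1
  funext i
  fin_cases i <;> rfl

end Polynomial

theorem stmt5_general (k : Type*) [Field k] :
    Function.Injective
      (MvPolynomial.aeval (fun i : Fin 2 => if i = 0 then va k * vb k else vc k * vd k) :
        MvPolynomial (Fin 2) k →ₐ[k] R k) := by
  have hdet : (1 : Polynomial (Polynomial k)) * (1 + 𝐱 * 𝐲) - 𝐱 * 𝐲 = 1 := by ring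
  refine AlgebraicIndependent.of_comp (sl2Lift 1 𝐱 𝐲 (1 + 𝐱 * 𝐲) hdet) ?_
  convert Polynomial.algebraicIndependent_C_X_X_add_C_X_mul_X_sq k using 1
  funext i
  fin_cases i
  · simp
  · simp
    ring

/-- The `k`-algebra map `k[X,Y] → R`, `X ↦ ab`, `Y ↦ cd`, is injective,
so `B = k[ab, cd]` is a polynomial ring in two variables. -/
theorem stmt5 (k : Type*) [Field k] [CharP k 2] :
    Function.Injective
      (MvPolynomial.aeval (fun i : Fin 2 => if i = 0 then va k * vb k else vc k * vd k) :
        MvPolynomial (Fin 2) k →ₐ[k] R k) :=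
  stmt5_general k
end
end

section
/- Let k be a field of characteristic 2, R = k[a,b,c,d]/(ad - bc - 1), and σ the automorphism of R swapping a ↔ b, c ↔ d. Then the subring of σ-fixed points of A = k[ab, ad, cd] is B = k[ab, cd]. -/
open MvPolynomial

noncomputable section

set_option maxHeartbeats 1000000 in
set_option synthInstance.maxHeartbeats 200000 in
/-- For the automorphism `σ` of `R` swapping `a ↔ b`, `c ↔ d`, the
fixed points of `σ` in `A = k[ab, ad, cd]` are exactly `B = k[ab, cd]`. -/
theorem stmt6 (k : Type*) [Field k] [CharP k 2]
    (σ : R k ≃ₐ[k] R k)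
    (hσ : σ (va k) = vb k ∧ σ (vb k) = va k ∧ σ (vc k) = vd k ∧ σ (vd k) = vc k) :
    ∀ y ∈ Algebra.adjoin k {va k * vb k, va k * vd k, vc k * vd k},
      (σ y = y ↔ y ∈ Algebra.adjoin k {va k * vb k, vc k * vd k}) := by
  obtain ⟨ha, hb, hc, hd⟩ := hσ
  have h2 : (1 + 1 : R k) = 0 := by
    have h : (1 + 1 : k) = 0 := by
      have h0 := CharP.cast_eq_zero k 2
      rwa [Nat.cast_ofNat, ← one_add_one_eq_two] at h0
    have h1 := congrArg (algebraMap k (R k)) h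
    rwa [map_add, map_one, map_zero] at h1
  have hrel : va k * vd k - vb k * vc k - 1 = 0 := by
    have hmem : (X 0 * X 3 - X 1 * X 2 - 1 : P k) ∈ sl2Rel k :=
      Ideal.subset_span rfl
    have := (Ideal.Quotient.eq_zero_iff_mem).2 hmem
    simpa [va, vb, vc, vd] using this
  have hbc : vb k * vc k = va k * vd k + 1 := by
    linear_combination -hrel - h2
  have ht2 : va k * vd k * (va k * vd k)
      = va k * vd k + va k * vb k * (vc k * vd k) := by
    linear_combination (-(va k * vd k)) * hbc - (va k * vd k) * h2
  have hσt : σ (va k * vd k) = va k * vd k + 1 := by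
    rw [map_mul, ha, hd]; exact hbc
  set B := Algebra.adjoin k {va k * vb k, vc k * vd k} with hB
  have hfix : ∀ y ∈ B, σ y = y := by
    have hle : B ≤ AlgHom.equalizer σ.toAlgHom (AlgHom.id k (R k)) := by
      rw [hB, Algebra.adjoin_le_iff]
      intro x hx
      simp only [Set.mem_insert_iff, Set.mem_singleton_iff] at hx
      rcases hx with rfl | rfl
      · show σ (va k * vb k) = va k * vb k
        rw [map_mul, ha, hb, mul_comm]
      · show σ (vc k * vd k) = vc k * vd k
        rw [map_mul, hc, hd, mul_comm]
    intro y hy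
    exact hle hy
  intro y hy
  have hdec : ∃ p ∈ B, ∃ q ∈ B, y = p + q * (va k * vd k) := by
    induction hy using Algebra.adjoin_induction with
    | mem x hx =>
      simp only [Set.mem_insert_iff, Set.mem_singleton_iff] at hx
      rcases hx with rfl | rfl | rfl
      · exact ⟨va k * vb k, Algebra.subset_adjoin (by simp), 0, Subalgebra.zero_mem B, by ring⟩
      · exact ⟨0, Subalgebra.zero_mem B, 1, Subalgebra.one_mem B, by ring⟩
      · exact ⟨vc k * vd k, Algebra.subset_adjoin (by simp), 0, Subalgebra.zero_mem B, by ring⟩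
    | algebraMap r =>
      exact ⟨algebraMap k (R k) r, Subalgebra.algebraMap_mem B r, 0,
        Subalgebra.zero_mem B, by ring⟩
    | add x y hx hy ihx ihy =>
      obtain ⟨p, hp, q, hq, rfl⟩ := ihx
      obtain ⟨p', hp', q', hq', rfl⟩ := ihy
      exact ⟨p + p', Subalgebra.add_mem B hp hp', q + q', Subalgebra.add_mem B hq hq', by ring⟩
    | mul x y hx hy ihx ihy =>
      obtain ⟨p, hp, q, hq, rfl⟩ := ihx
      obtain ⟨p', hp', q', hq', rfl⟩ := ihy
      have hab : va k * vb k ∈ B := Algebra.subset_adjoin (by simp)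
      have hcd : vc k * vd k ∈ B := Algebra.subset_adjoin (by simp)
      refine ⟨p * p' + q * q' * (va k * vb k * (vc k * vd k)),
        Subalgebra.add_mem B (Subalgebra.mul_mem B hp hp')
          (Subalgebra.mul_mem B (Subalgebra.mul_mem B hq hq')
            (Subalgebra.mul_mem B hab hcd)),
        p * q' + q * p' + q * q',
        Subalgebra.add_mem B (Subalgebra.add_mem B
          (Subalgebra.mul_mem B hp hq') (Subalgebra.mul_mem B hq hp'))
          (Subalgebra.mul_mem B hq hq'), ?_⟩
      linear_combination (q * q') * ht2
  obtain ⟨p, hp, q, hq, rfl⟩ := hdec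
  constructor
  · intro hσy
    have hσy' : σ (p + q * (va k * vd k)) = p + q * (va k * vd k) + q := by
      rw [map_add, map_mul, hfix p hp, hfix q hq, hσt]; ring
    have hq0 : q = 0 := left_eq_add.mp (hσy.symm.trans hσy')
    rw [hq0]
    simpa using hp
  · intro hyB
    exact hfix _ hyB
end
end

section
/- Let k be a field of characteristic 2 and R = k[a,b,c,d]/(ad - bc - 1). For every r ≥ 1, the element ad - (ad)^(2^r) lies in the subring B = k[ab, cd] of R. -/
open MvPolynomial

noncomputable section

lemma two_eq_zero (k : Type*) [Field k] [CharP k 2] : (2 : R k) = 0 := by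
  have h2 : (2 : k) = 0 := by exact_mod_cast CharP.cast_eq_zero k 2
  have : (2 : R k) = algebraMap k (R k) 2 := by
    rw [map_ofNat]
  rw [this, h2, map_zero]

lemma key (k : Type*) [Field k] [CharP k 2] :
    (va k * vd k) ^ 2 = va k * vd k + (va k * vb k) * (vc k * vd k) := by
  have h : ((X 0 * X 3) ^ 2 - (X 0 * X 3 + (X 0 * X 1) * (X 2 * X 3)) : P k)
      ∈ sl2Rel k := by
    refine Ideal.mem_span_singleton.mpr ⟨X 0 * X 3, by ring⟩
  have := (Ideal.Quotient.eq (I := sl2Rel k)).mpr h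
  simpa [va, vb, vc, vd, map_mul, map_add, map_pow] using this

/-- For every `r ≥ 1`, `ad - (ad)^(2^r)` lies in `B = k[ab, cd]`. -/
theorem stmt7 (k : Type*) [Field k] [CharP k 2] :
    ∀ r : ℕ, 1 ≤ r →
      va k * vd k - (va k * vd k) ^ (2 ^ r) ∈
        Algebra.adjoin k {va k * vb k, vc k * vd k} := by
  set B := Algebra.adjoin k {va k * vb k, vc k * vd k} with hB
  set x := va k * vd k with hx
  set t := (va k * vb k) * (vc k * vd k) with ht
  have htB : t ∈ B := B.mul_mem
    (Algebra.subset_adjoin (Set.mem_insert _ _))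
    (Algebra.subset_adjoin (Set.mem_insert_of_mem _ rfl))
  have h2 : (2 : R k) = 0 := two_eq_zero k
  have hsq : ∀ u : R k, (x + u) ^ 2 = x + t + u ^ 2 := by
    intro u
    have : (x + u) ^ 2 = x ^ 2 + 2 * x * u + u ^ 2 := by ring
    rw [this, h2, key k]
    ring
  have main : ∀ r : ℕ, 1 ≤ r → ∃ u ∈ B, x ^ (2 ^ r) = x + u := by
    intro r hr
    induction r with
    | zero => omega
    | succ n ih =>
      rcases Nat.eq_or_lt_of_le hr with h | h
      · refine ⟨t, htB, ?_⟩
        have : n = 0 := by omega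
        subst this
        simpa using key k
      · obtain ⟨u, huB, hu⟩ := ih (by omega)
        refine ⟨t + u ^ 2, B.add_mem htB (B.pow_mem huB 2), ?_⟩
        have : x ^ (2 ^ (n + 1)) = (x ^ (2 ^ n)) ^ 2 := by
          rw [← pow_mul, pow_succ]
        rw [this, hu, hsq]
        ring
  intro r hr
  obtain ⟨u, huB, hu⟩ := main r hr
  rw [hu]
  have : x - (x + u) = -u := by ring
  rw [this]
  exact B.neg_mem huB
end
end

section
/- Let k be a field of characteristic 2 and R = k[a,b,c,d]/(ad - bc - 1). The k-subalgebra A = k[ab, ad, cd] of R is generated as a k-algebra by the three elements ab, ad, cd, and satisfies the relation (ad)^2 - ad = (ab)(cd); moreover A ≅ k[X,Y,Z]/(Z^2 - Z - XY) via X ↦ ab, Y ↦ cd, Z ↦ ad. -/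
open MvPolynomial

noncomputable section

/-! The relation is `ad (ad - 1) = ad · bc`. Modulo `f = Z² - Z - XY` every polynomial is
congruent to some `r₀(X, Y) + r₁(X, Y) Z`. To see that such a form maps to `0` in `R` only if
`r₀ = r₁ = 0`, evaluate `R` at the `k[x][y]`-point `[[y, xy - 1], [1, x]]` of `SL₂`: there
`X, Y, Z` become `y(xy - 1), x, xy`, so `r(X, Y)` has even degree in `y` while `r₁(X, Y) Z` has
odd degree, and the two summands cannot cancel. -/

namespace Polynomial

variable {A : Type*} [CommRing A] [IsDomain A]

theorem comp_ne_zero_of_natDegree_pos {q v : A[X]} (hq : q ≠ 0) (hv : 0 < v.natDegree) :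
    q.comp v ≠ 0 := by
  intro h
  rcases comp_eq_zero_iff.mp h with h | ⟨-, hC⟩
  · exact hq h
  · rw [hC, natDegree_C] at hv
    exact hv.false

theorem eq_zero_of_comp_add_comp_mul_eq_zero {v w q₀ q₁ : A[X]} (hv : 0 < v.natDegree)
    (hvw : ¬ v.natDegree ∣ w.natDegree) (h : q₀.comp v + q₁.comp v * w = 0) :
    q₀ = 0 ∧ q₁ = 0 := by
  have hw : w ≠ 0 := by rintro rfl; simp at hvw
  by_cases hq₁ : q₁ = 0
  · subst hq₁
    simp only [zero_comp, zero_mul, add_zero] at h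
    exact ⟨not_not.mp fun hq₀ => comp_ne_zero_of_natDegree_pos hq₀ hv h, rfl⟩
  · have hdeg := congrArg natDegree (eq_neg_of_add_eq_zero_left h)
    rw [natDegree_neg, natDegree_mul (comp_ne_zero_of_natDegree_pos hq₁ hv) hw,
      natDegree_comp, natDegree_comp] at hdeg
    exact absurd ((Nat.dvd_add_right (dvd_mul_left _ _)).mp (hdeg ▸ dvd_mul_left _ _)) hvw

end Polynomial

namespace SL2

variable (k : Type*) [Field k]

theorem va_mul_vd_sub_vb_mul_vc : va k * vd k - vb k * vc k = 1 := by
  rw [va, vb, vc, vd, ← map_mul, ← map_mul, ← map_sub, ← map_one (Ideal.Quotient.mk _),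
    Ideal.Quotient.eq]
  exact Ideal.subset_span rfl

theorem sq_va_mul_vd_sub_eq_mul :
    (va k * vd k) ^ 2 - va k * vd k = (va k * vb k) * (vc k * vd k) := by
  linear_combination (va k * vd k) * va_mul_vd_sub_vb_mul_vc k

def invariantsMap : MvPolynomial (Fin 3) k →ₐ[k] R k :=
  aeval ![va k * vb k, vc k * vd k, va k * vd k]

def quadric : MvPolynomial (Fin 3) k := X 2 ^ 2 - X 2 - X 0 * X 1

theorem range_invariantsMap :
    (invariantsMap k).range = Algebra.adjoin k {va k * vb k, va k * vd k, vc k * vd k} := by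
  rw [invariantsMap, ← Algebra.adjoin_range_eq_range_aeval]
  congr 1
  ext u
  simp only [Matrix.range_cons, Matrix.range_empty, Set.union_empty, Set.singleton_union,
    Set.mem_insert_iff, Set.mem_singleton_iff]
  tauto

theorem span_quadric_le_ker :
    Ideal.span {quadric k} ≤ RingHom.ker (invariantsMap k).toRingHom := by
  rw [Ideal.span_singleton_le_iff_mem, RingHom.mem_ker]
  simp only [AlgHom.toRingHom_eq_coe, RingHom.coe_coe, invariantsMap, quadric, map_sub, map_pow,
    map_mul, aeval_X, Matrix.cons_val]
  linear_combination sq_va_mul_vd_sub_eq_mul k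

theorem exists_normalForm_mod_quadric (p : MvPolynomial (Fin 3) k) :
    ∃ r₀ r₁ : MvPolynomial (Fin 2) k, Ideal.Quotient.mk (Ideal.span {quadric k}) p =
      Ideal.Quotient.mk _ (rename Fin.castSucc r₀ + rename Fin.castSucc r₁ * X 2) := by
  set π := Ideal.Quotient.mk (Ideal.span {quadric k})
  have hZ : π (X 2) ^ 2 = π (X 2) + π (X 0) * π (X 1) := by
    have : π (X 2 ^ 2 - X 2 - X 0 * X 1) = 0 :=
      Ideal.Quotient.eq_zero_iff_mem.mpr (Ideal.mem_span_singleton_self _)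
    simp only [map_sub, map_pow, map_mul] at this
    linear_combination this
  induction p using MvPolynomial.induction_on with
  | C a => exact ⟨C a, 0, by simp⟩
  | add p q hp hq =>
    obtain ⟨r₀, r₁, hp⟩ := hp
    obtain ⟨s₀, s₁, hq⟩ := hq
    refine ⟨r₀ + s₀, r₁ + s₁, ?_⟩
    simp only [map_add, map_mul] at hp hq ⊢
    linear_combination hp + hq
  | mul_X p i hp =>
    obtain ⟨r₀, r₁, hp⟩ := hp
    fin_cases i
    · refine ⟨r₀ * X 0, r₁ * X 0, ?_⟩
      simp only [map_add, map_mul, rename_X, Fin.reduceFinMk, Fin.castSucc_zero] at hp ⊢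
      linear_combination π (X 0) * hp
    · refine ⟨r₀ * X 1, r₁ * X 1, ?_⟩
      simp only [map_add, map_mul, rename_X, Fin.reduceFinMk, Fin.castSucc_one] at hp ⊢
      linear_combination π (X 1) * hp
    · refine ⟨r₁ * X 0 * X 1, r₀ + r₁, ?_⟩
      simp only [map_add, map_mul, rename_X, Fin.reduceFinMk, Fin.castSucc_zero,
        Fin.castSucc_one] at hp ⊢
      linear_combination π (X 2) * hp + π (rename Fin.castSucc r₁) * hZ

local notation "S" => Polynomial (MvPolynomial (Fin 1) k)

/-- Evaluation at the `k[x][y]`-point `[[y, xy - 1], [1, x]]` of `SL₂`. -/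
def evalPoint : R k →ₐ[k] S :=
  Ideal.Quotient.liftₐ (sl2Rel k)
    (aeval ![Polynomial.X, Polynomial.C (X 0) * Polynomial.X - 1, 1, Polynomial.C (X 0)])
    fun _ h => by
      obtain ⟨c, rfl⟩ := Ideal.mem_span_singleton'.mp h
      simp

theorem evalPoint_mk (p : P k) :
    evalPoint k (Ideal.Quotient.mk _ p) =
      aeval ![Polynomial.X, Polynomial.C (X 0) * Polynomial.X - 1, 1, Polynomial.C (X 0)] p :=
  rfl

theorem natDegree_evalPoint_va_mul_vb : (evalPoint k (va k * vb k)).natDegree = 2 := by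
  simp only [va, vb, ← map_mul, evalPoint_mk]
  simp only [map_mul, aeval_X, Matrix.cons_val]
  compute_degree!

theorem natDegree_evalPoint_va_mul_vd : (evalPoint k (va k * vd k)).natDegree = 1 := by
  simp only [va, vd, ← map_mul, evalPoint_mk]
  simp only [map_mul, aeval_X, Matrix.cons_val]
  compute_degree!

theorem evalPoint_invariantsMap_rename (r : MvPolynomial (Fin 2) k) :
    evalPoint k (invariantsMap k (rename Fin.castSucc r)) =
      (finSuccEquiv k 1 r).comp (evalPoint k (va k * vb k)) := by
  suffices (evalPoint k).comp ((invariantsMap k).comp (rename Fin.castSucc)) =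
      ((Polynomial.aeval (evalPoint k (va k * vb k))).restrictScalars k).comp
        (finSuccEquiv k 1).toAlgHom from
    AlgHom.congr_fun this r
  refine algHom_ext fun i => ?_
  fin_cases i
  · simp [invariantsMap, finSuccEquiv_X_zero]
  · have : finSuccEquiv k 1 (X 1) = Polynomial.C (X 0) := finSuccEquiv_X_succ (j := 0)
    simp [invariantsMap, vc, vd, evalPoint_mk, this]

theorem ker_invariantsMap :
    RingHom.ker (invariantsMap k).toRingHom = Ideal.span {quadric k} := by
  refine le_antisymm (fun p hp => ?_) (span_quadric_le_ker k)
  obtain ⟨r₀, r₁, hr⟩ := exists_normalForm_mod_quadric k p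
  have hφ : invariantsMap k (rename Fin.castSucc r₀ + rename Fin.castSucc r₁ * X 2) = 0 := by
    have := span_quadric_le_ker k (Ideal.Quotient.eq.mp hr)
    rwa [RingHom.mem_ker, map_sub, hp, zero_sub, neg_eq_zero] at this
  rw [map_add, map_mul, show invariantsMap k (X 2) = va k * vd k by simp [invariantsMap]] at hφ
  have hS := congrArg (evalPoint k) hφ
  rw [map_add, map_mul, evalPoint_invariantsMap_rename, evalPoint_invariantsMap_rename,
    map_zero] at hS
  obtain ⟨h₀, h₁⟩ := Polynomial.eq_zero_of_comp_add_comp_mul_eq_zero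
    (by rw [natDegree_evalPoint_va_mul_vb]; norm_num)
    (by rw [natDegree_evalPoint_va_mul_vb, natDegree_evalPoint_va_mul_vd]; norm_num) hS
  rw [← Ideal.Quotient.eq_zero_iff_mem, hr, (finSuccEquiv k 1).map_eq_zero_iff.mp h₀,
    (finSuccEquiv k 1).map_eq_zero_iff.mp h₁]
  simp

end SL2

theorem stmt15_general (k : Type*) [Field k] :
    letI φ : MvPolynomial (Fin 3) k →ₐ[k] R k :=
      MvPolynomial.aeval ![va k * vb k, vc k * vd k, va k * vd k]
    (va k * vd k) ^ 2 - va k * vd k = (va k * vb k) * (vc k * vd k) ∧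
    φ.range = Algebra.adjoin k {va k * vb k, va k * vd k, vc k * vd k} ∧
    RingHom.ker φ.toRingHom = Ideal.span {X 2 ^ 2 - X 2 - X 0 * X 1} :=
  ⟨SL2.sq_va_mul_vd_sub_eq_mul k, SL2.range_invariantsMap k, SL2.ker_invariantsMap k⟩

/-- `A = k[ab, ad, cd]` satisfies `(ad)² - ad = (ab)(cd)`, and
`A ≅ k[X,Y,Z]/(Z² - Z - XY)`: the kernel of `k[X,Y,Z] → R`, `X ↦ ab`, `Y ↦ cd`,
`Z ↦ ad`, is exactly the ideal `(Z² - Z - XY)`, and its range is `A`. -/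
theorem stmt15 (k : Type*) [Field k] [CharP k 2] :
    letI φ : MvPolynomial (Fin 3) k →ₐ[k] R k :=
      MvPolynomial.aeval ![va k * vb k, vc k * vd k, va k * vd k]
    (va k * vd k) ^ 2 - va k * vd k = (va k * vb k) * (vc k * vd k) ∧
    φ.range = Algebra.adjoin k {va k * vb k, va k * vd k, vc k * vd k} ∧
    RingHom.ker φ.toRingHom = Ideal.span {X 2 ^ 2 - X 2 - X 0 * X 1} :=
  stmt15_general k
end
end
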